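/- arXiv:1801.04769 — 2 statements merged into one kernel-verified Lean document; each statement's English description precedes it below -/
import Mathlib

section
/- The vector field X₃ = x² ∂_x - (2xy + 6) ∂_y generates a symmetry of the Chazy equation: if y solves y''' - 2yy'' + 3(y')² = 0, then for each parameter ε (with 1 - εx ≠ 0 on the domain) the function ỹ(x̃) defined by x̃ = x/(1-εx) and ỹ(x̃) = (1-εx)² y(x) - 6ε(1-εx) also solves the Chazy equation in the variable x̃. -/
open Filter Topology
open scoped ContDiff

/-- Derivative of the Möbius map t ↦ t/(1+εt). -/
lemma mobius_hasDerivAt (ε t : ℝ) (h : 1 + ε * t ≠ 0) :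
    HasDerivAt (fun t : ℝ => t / (1 + ε * t)) (((1 + ε * t) ^ 2)⁻¹) t := by
  have hu : HasDerivAt (fun t : ℝ => 1 + ε * t) ε t := by
    simpa using ((hasDerivAt_id t).const_mul ε).const_add 1
  have := (hasDerivAt_id t).div hu h
  refine this.congr_deriv ?_
  simp only [id_eq]
  field_simp
  ring

set_option maxHeartbeats 2000000 in
/-- X₃ = x²∂ₓ - (2xy+6)∂_y generates a symmetry of the Chazy equation: under the
    fractional-linear flow x̃ = x/(1-εx), ỹ = (1-εx)²y - 6ε(1-εx) (whose inverse is
    x = x̃/(1+εx̃)), solutions map to solutions. -/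
theorem chazy_projective_symmetry (y : ℝ → ℝ) (s : Set ℝ)
    (hy : ContDiff ℝ (⊤ : ℕ∞) y)
    (hsol : ∀ x ∈ s,
      deriv (deriv (deriv y)) x - 2 * y x * deriv (deriv y) x + 3 * (deriv y x) ^ 2 = 0)
    (ε : ℝ) :
    ∀ t : ℝ, 1 + ε * t ≠ 0 → t / (1 + ε * t) ∈ s →
      (fun z : ℝ → ℝ =>
        deriv (deriv (deriv z)) t - 2 * z t * deriv (deriv z) t + 3 * (deriv z t) ^ 2)
        (fun t =>
          (1 - ε * (t / (1 + ε * t))) ^ 2 * y (t / (1 + ε * t))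
            - 6 * ε * (1 - ε * (t / (1 + ε * t)))) = 0 := by
  intro t₀ hut₀ hxs
  -- smoothness of derivatives of y
  have hy0 : ContDiff ℝ ∞ y := hy.of_le (by simp)
  have hy1 : ContDiff ℝ ∞ (deriv y) := (contDiff_infty_iff_deriv.mp hy0).2
  have hy2 : ContDiff ℝ ∞ (deriv (deriv y)) := (contDiff_infty_iff_deriv.mp hy1).2
  have hdy0 : Differentiable ℝ y := (contDiff_infty_iff_deriv.mp hy0).1
  have hdy1 : Differentiable ℝ (deriv y) := (contDiff_infty_iff_deriv.mp hy1).1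
  have hdy2 : Differentiable ℝ (deriv (deriv y)) := (contDiff_infty_iff_deriv.mp hy2).1
  set X : ℝ → ℝ := fun t => t / (1 + ε * t) with hX_def
  -- the simplified form of the transformed function and its derivatives
  set Z : ℝ → ℝ := fun t => y (X t) / (1 + ε * t) ^ 2 - 6 * ε / (1 + ε * t) with hZ_def
  set Z1 : ℝ → ℝ := fun t => deriv y (X t) / (1 + ε * t) ^ 4
      - 2 * ε * y (X t) / (1 + ε * t) ^ 3 + 6 * ε ^ 2 / (1 + ε * t) ^ 2 with hZ1_def
  set Z2 : ℝ → ℝ := fun t => deriv (deriv y) (X t) / (1 + ε * t) ^ 6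
      - 6 * ε * deriv y (X t) / (1 + ε * t) ^ 5
      + 6 * ε ^ 2 * y (X t) / (1 + ε * t) ^ 4
      - 12 * ε ^ 3 / (1 + ε * t) ^ 3 with hZ2_def
  set Z3 : ℝ → ℝ := fun t => deriv (deriv (deriv y)) (X t) / (1 + ε * t) ^ 8
      - 12 * ε * deriv (deriv y) (X t) / (1 + ε * t) ^ 7
      + 36 * ε ^ 2 * deriv y (X t) / (1 + ε * t) ^ 6
      - 24 * ε ^ 3 * y (X t) / (1 + ε * t) ^ 5
      + 36 * ε ^ 4 / (1 + ε * t) ^ 4 with hZ3_def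
  -- derivative of 1 + ε t
  have hu : ∀ t : ℝ, HasDerivAt (fun t : ℝ => 1 + ε * t) ε t := fun t => by
    simpa using ((hasDerivAt_id t).const_mul ε).const_add 1
  -- compositions with X
  have hcomp : ∀ (g : ℝ → ℝ), Differentiable ℝ g → ∀ t : ℝ, 1 + ε * t ≠ 0 →
      HasDerivAt (fun t => g (X t)) (deriv g (X t) * ((1 + ε * t) ^ 2)⁻¹) t := by
    intro g hg t ht
    exact ((hg (X t)).hasDerivAt).comp t (mobius_hasDerivAt ε t ht)
  -- HasDerivAt chain
  have hZ' : ∀ t : ℝ, 1 + ε * t ≠ 0 → HasDerivAt Z (Z1 t) t := by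
    intro t ht
    have h1 := (hcomp y hdy0 t ht).div ((hu t).pow 2) (pow_ne_zero 2 ht)
    have h2 := (hasDerivAt_const t (6 * ε)).div (hu t) ht
    refine (h1.sub h2).congr_deriv ?_
    simp only [hZ1_def, Pi.pow_apply]
    field_simp
    ring
  have hZ1' : ∀ t : ℝ, 1 + ε * t ≠ 0 → HasDerivAt Z1 (Z2 t) t := by
    intro t ht
    have h1 := (hcomp (deriv y) hdy1 t ht).div ((hu t).pow 4) (pow_ne_zero 4 ht)
    have h2 := ((hcomp y hdy0 t ht).const_mul (2 * ε)).div ((hu t).pow 3) (pow_ne_zero 3 ht)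
    have h3 := (hasDerivAt_const t (6 * ε ^ 2)).div ((hu t).pow 2) (pow_ne_zero 2 ht)
    refine ((h1.sub h2).add h3).congr_deriv ?_
    simp only [hZ2_def, Pi.pow_apply]
    field_simp
    ring
  have hZ2' : ∀ t : ℝ, 1 + ε * t ≠ 0 → HasDerivAt Z2 (Z3 t) t := by
    intro t ht
    have h1 := (hcomp (deriv (deriv y)) hdy2 t ht).div ((hu t).pow 6) (pow_ne_zero 6 ht)
    have h2 := ((hcomp (deriv y) hdy1 t ht).const_mul (6 * ε)).div ((hu t).pow 5)
      (pow_ne_zero 5 ht)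
    have h3 := ((hcomp y hdy0 t ht).const_mul (6 * ε ^ 2)).div ((hu t).pow 4)
      (pow_ne_zero 4 ht)
    have h4 := (hasDerivAt_const t (12 * ε ^ 3)).div ((hu t).pow 3) (pow_ne_zero 3 ht)
    refine (((h1.sub h2).add h3).sub h4).congr_deriv ?_
    simp only [hZ3_def, Pi.pow_apply]
    field_simp
    ring
  -- the set where everything is defined
  have hSopen : IsOpen {t : ℝ | 1 + ε * t ≠ 0} := by
    have : Continuous fun t : ℝ => 1 + ε * t := by fun_prop
    exact isOpen_compl_singleton.preimage this
  have hmem : {t : ℝ | 1 + ε * t ≠ 0} ∈ 𝓝 t₀ := hSopen.mem_nhds hut₀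
  set z : ℝ → ℝ := fun t =>
      (1 - ε * (t / (1 + ε * t))) ^ 2 * y (t / (1 + ε * t))
        - 6 * ε * (1 - ε * (t / (1 + ε * t))) with hz_def
  -- z agrees with Z on the set
  have hzZ : ∀ t : ℝ, 1 + ε * t ≠ 0 → z t = Z t := by
    intro t ht
    have h1 : 1 - ε * (t / (1 + ε * t)) = 1 / (1 + ε * t) := by
      field_simp
      ring
    simp only [hz_def, hZ_def, hX_def, h1]
    field_simp
  -- derivatives of z agree with Z1, Z2, Z3 on the set
  have hd1 : ∀ t : ℝ, 1 + ε * t ≠ 0 → deriv z t = Z1 t := by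
    intro t ht
    have he : z =ᶠ[𝓝 t] Z :=
      eventually_of_mem (hSopen.mem_nhds ht) (fun t' ht' => hzZ t' ht')
    rw [he.deriv_eq, (hZ' t ht).deriv]
  have hd2 : ∀ t : ℝ, 1 + ε * t ≠ 0 → deriv (deriv z) t = Z2 t := by
    intro t ht
    have he : deriv z =ᶠ[𝓝 t] Z1 :=
      eventually_of_mem (hSopen.mem_nhds ht) (fun t' ht' => hd1 t' ht')
    rw [he.deriv_eq, (hZ1' t ht).deriv]
  have hd3 : ∀ t : ℝ, 1 + ε * t ≠ 0 → deriv (deriv (deriv z)) t = Z3 t := by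
    intro t ht
    have he : deriv (deriv z) =ᶠ[𝓝 t] Z2 :=
      eventually_of_mem (hSopen.mem_nhds ht) (fun t' ht' => hd2 t' ht')
    rw [he.deriv_eq, (hZ2' t ht).deriv]
  -- now evaluate
  show deriv (deriv (deriv z)) t₀ - 2 * z t₀ * deriv (deriv z) t₀ + 3 * (deriv z t₀) ^ 2 = 0
  rw [hd3 t₀ hut₀, hd2 t₀ hut₀, hd1 t₀ hut₀, hzZ t₀ hut₀]
  have hsol' := hsol (X t₀) hxs
  have key : Z3 t₀ - 2 * Z t₀ * Z2 t₀ + 3 * (Z1 t₀) ^ 2 =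
      (deriv (deriv (deriv y)) (X t₀) - 2 * y (X t₀) * deriv (deriv y) (X t₀)
        + 3 * (deriv y (X t₀)) ^ 2) / (1 + ε * t₀) ^ 8 := by
    simp only [hZ_def, hZ1_def, hZ2_def, hZ3_def]
    field_simp
    ring
  rw [key, hsol', zero_div]
end

section
/- Let y solve the Chazy equation on an interval where χ(x) = x·y(x) is strictly monotone (hence invertible) and x ≠ 0. Define ψ as a function of χ by ψ = x² y'(x). Then ψ(χ) satisfies (χ+ψ)² ψ'' + (χ+ψ)(ψ' - 2(2+χ)) ψ' + (6 + 4χ + 3ψ)ψ = 0, where primes denote d/dχ. -/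
/-- Reduction of the Chazy equation by the scaling symmetry X₂ using the invariants
    χ = xy, ψ = x²y': if y solves the Chazy equation on an open set where x ≠ 0 and
    χ(x) = x·y(x) is strictly monotone, and ψ(x·y(x)) = x²·y'(x), then ψ(χ) satisfies
    (χ+ψ)²ψ'' + (χ+ψ)(ψ' - 2(2+χ))ψ' + (6+4χ+3ψ)ψ = 0. -/
theorem chazy_reduction_X2 (y ψ : ℝ → ℝ) (s : Set ℝ) (hs : IsOpen s)
    (hy : ContDiff ℝ (⊤ : ℕ∞) y) (hψ : ContDiff ℝ (⊤ : ℕ∞) ψ)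
    (hx0 : ∀ x ∈ s, x ≠ 0)
    (hmono : StrictMonoOn (fun x => x * y x) s)
    (hrel : ∀ x ∈ s, ψ (x * y x) = x ^ 2 * deriv y x)
    (hsol : ∀ x ∈ s,
      deriv (deriv (deriv y)) x - 2 * y x * deriv (deriv y) x + 3 * (deriv y x) ^ 2 = 0) :
    ∀ x ∈ s,
      (x * y x + ψ (x * y x)) ^ 2 * deriv (deriv ψ) (x * y x)
        + (x * y x + ψ (x * y x)) * (deriv ψ (x * y x) - 2 * (2 + x * y x))
            * deriv ψ (x * y x)
        + (6 + 4 * (x * y x) + 3 * ψ (x * y x)) * ψ (x * y x) = 0 := by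
  have hy1 : ContDiff ℝ (⊤ : ℕ∞) (deriv y) := (contDiff_infty_iff_deriv.mp hy).2
  have hy2 : ContDiff ℝ (⊤ : ℕ∞) (deriv (deriv y)) := (contDiff_infty_iff_deriv.mp hy1).2
  have hψ1 : ContDiff ℝ (⊤ : ℕ∞) (deriv ψ) := (contDiff_infty_iff_deriv.mp hψ).2
  have hdy : Differentiable ℝ y := hy.differentiable (by simp)
  have hdy1 : Differentiable ℝ (deriv y) := hy1.differentiable (by simp)
  have hdy2 : Differentiable ℝ (deriv (deriv y)) := hy2.differentiable (by simp)
  have hdψ : Differentiable ℝ ψ := hψ.differentiable (by simp)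
  have hdψ1 : Differentiable ℝ (deriv ψ) := hψ1.differentiable (by simp)
  -- derivative of χ(t) = t * y t
  have hχ : ∀ x : ℝ, HasDerivAt (fun t => t * y t) (y x + x * deriv y x) x := by
    intro x
    have := (hasDerivAt_id x).mul (hdy x).hasDerivAt
    simpa [one_mul, Pi.mul_def] using this
  -- first differentiated relation E1
  have E1 : ∀ x ∈ s, deriv ψ (x * y x) * (y x + x * deriv y x)
      = 2 * x * deriv y x + x ^ 2 * deriv (deriv y) x := by
    intro x hx
    have hL : HasDerivAt (fun t => ψ (t * y t))
        (deriv ψ (x * y x) * (y x + x * deriv y x)) x :=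
      (hdψ (x * y x)).hasDerivAt.comp x (hχ x)
    have hR : HasDerivAt (fun t => t ^ 2 * deriv y t)
        (2 * x * deriv y x + x ^ 2 * deriv (deriv y) x) x := by
      have := (hasDerivAt_pow 2 x).mul (hdy1 x).hasDerivAt
      refine this.congr_deriv ?_
      ring
    have heq : (fun t => ψ (t * y t)) =ᶠ[nhds x] (fun t => t ^ 2 * deriv y t) :=
      Filter.eventually_of_mem (hs.mem_nhds hx) hrel
    have := heq.deriv_eq
    rw [hL.deriv, hR.deriv] at this
    exact this
  -- second differentiated relation E2
  have E2 : ∀ x ∈ s,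
      deriv (deriv ψ) (x * y x) * (y x + x * deriv y x) * (y x + x * deriv y x)
        + deriv ψ (x * y x) * (2 * deriv y x + x * deriv (deriv y) x)
      = 2 * deriv y x + 4 * x * deriv (deriv y) x + x ^ 2 * deriv (deriv (deriv y)) x := by
    intro x hx
    have hχ' : HasDerivAt (fun t => y t + t * deriv y t)
        (deriv y x + (deriv y x + x * deriv (deriv y) x)) x :=
      (hdy x).hasDerivAt.add ((hasDerivAt_id x).mul (hdy1 x).hasDerivAt |>.congr_deriv (by simp only [id_eq]; ring))
    have hψχ : HasDerivAt (fun t => deriv ψ (t * y t))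
        (deriv (deriv ψ) (x * y x) * (y x + x * deriv y x)) x :=
      by have := (hdψ1 (x * y x)).hasDerivAt.comp x (hχ x); exact this
    have hL : HasDerivAt (fun t => deriv ψ (t * y t) * (y t + t * deriv y t))
        (deriv (deriv ψ) (x * y x) * (y x + x * deriv y x) * (y x + x * deriv y x)
          + deriv ψ (x * y x) * (2 * deriv y x + x * deriv (deriv y) x)) x := by
      have := hψχ.mul hχ'
      refine this.congr_deriv ?_
      ring
    have hR : HasDerivAt (fun t => 2 * t * deriv y t + t ^ 2 * deriv (deriv y) t)
        (2 * deriv y x + 4 * x * deriv (deriv y) x + x ^ 2 * deriv (deriv (deriv y)) x) x := by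
      have h1 := ((hasDerivAt_id x).const_mul (2 : ℝ)).mul (hdy1 x).hasDerivAt
      have h2 := (hasDerivAt_pow 2 x).mul (hdy2 x).hasDerivAt
      have := h1.add h2
      refine this.congr_deriv ?_
      simp only [id_eq]
      push_cast
      ring
    have heq : (fun t => deriv ψ (t * y t) * (y t + t * deriv y t))
        =ᶠ[nhds x] (fun t => 2 * t * deriv y t + t ^ 2 * deriv (deriv y) t) :=
      Filter.eventually_of_mem (hs.mem_nhds hx) E1
    have := heq.deriv_eq
    rw [hL.deriv, hR.deriv] at this
    exact this
  intro x hx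
  have h1 := E1 x hx
  have h2 := E2 x hx
  have h3 := hsol x hx
  have h4 := hrel x hx
  rw [h4]
  linear_combination x ^ 2 * h2 + x * deriv ψ (x * y x) * h1
    - (4 + 2 * x * y x) * x * h1 + x ^ 4 * h3
end
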